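/- Let ℋ be an infinite-dimensional complex Hilbert space, A ∈ B(ℋ), and μ ∈ ℂ such that A − μI is a compact operator. Then the following are equivalent: (a) Λ_∞(A) is nonempty; (b) Λ_∞(A) = {μ}; (c) μ ∈ Λ_k(A) for every positive integer k. -/

import Mathlib

noncomputable section

open scoped InnerProductSpace
open Complex

variable {H : Type*} [NormedAddCommGroup H] [InnerProductSpace ℂ H] [CompleteSpace H]

/-- `P` is an orthogonal projection: self-adjoint and idempotent. -/
def IsOrthProj (P : H →L[ℂ] H) : Prop :=
  IsSelfAdjoint P ∧ P ∘L P = P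

/-- The rank of a bounded operator, as a cardinal. -/
def opRank (F : H →L[ℂ] H) : Cardinal :=
  Module.rank ℂ (LinearMap.range (F : H →ₗ[ℂ] H))

/-- The rank-`k` numerical range `Λ_k(A)`. -/
def rankKRange (k : ℕ) (A : H →L[ℂ] H) : Set ℂ :=
  { lam | ∃ P : H →L[ℂ] H, IsOrthProj P ∧ opRank P = k ∧ P ∘L A ∘L P = lam • P }

/-- The classical numerical range `W(A)`. -/
def numRange (A : H →L[ℂ] H) : Set ℂ :=
  { z | ∃ x : H, ‖x‖ = 1 ∧ ⟪x, A x⟫_ℂ = z }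

/-- `λ_k(T)`: the supremum over `k`-dimensional compressions of the `k`-th largest
eigenvalue of the compression (Courant–Fischer form: sup over `k`-dimensional
subspaces of the infimum of the Rayleigh quotient). -/
def lambdaSA (k : ℕ) (T : H →L[ℂ] H) : ℝ :=
  sSup { t : ℝ | ∃ V : Submodule ℂ H, Module.finrank ℂ V = k ∧
    ∀ x ∈ V, ‖x‖ = 1 → t ≤ (⟪x, T x⟫_ℂ).re }

/-- The real part `(T + T*)/2` of an operator. -/
def reOp (T : H →L[ℂ] H) : H →L[ℂ] H :=
  (2 : ℂ)⁻¹ • (T + ContinuousLinearMap.adjoint T)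

/-- The set `Ω_k(A)`. -/
def omegaK (k : ℕ) (A : H →L[ℂ] H) : Set ℂ :=
  { μ | ∀ ξ ∈ Set.Ico (0 : ℝ) (2 * Real.pi),
      (Complex.exp (ξ * Complex.I) * μ).re ≤ lambdaSA k (reOp (Complex.exp (ξ * Complex.I) • A)) }


/-- The rank-`∞` numerical range `Λ_∞(A)`. -/
def rankInfRange (A : H →L[ℂ] H) : Set ℂ :=
  { lam | ∃ P : H →L[ℂ] H, IsOrthProj P ∧ Cardinal.aleph0 ≤ opRank P ∧
      P ∘L A ∘L P = lam • P }

/-!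
Writing `V` for the range of an orthogonal projection `P`, the condition `P A P = λ P` says that
`⟪x, A y⟫ = λ ⟪x, y⟫` for `x, y ∈ V`, so all ranges in question are about subspaces on which `A`
compresses to a scalar. If `V` is infinite-dimensional and `A - μ` is compact, then
`(λ - μ) P = P (A - μ) P` is compact, which forces `λ = μ`; and the finite-dimensional subspaces
of `V` show `μ ∈ Λ_k(A)`. Conversely, if `μ ∈ Λ_k(A)` for every `k`, a maximal subspace on
which `A` compresses to `μ` (Zorn) is infinite-dimensional: an `n`-dimensional one `M` could be
enlarged by the part of a `(3n+1)`-dimensional such subspace that is orthogonal to `M`, `A M`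
and `A* M`.
-/

open Module Submodule
open scoped InnerProduct

section InnerProductSpace

variable {𝕜 E : Type*} [RCLike 𝕜] [NormedAddCommGroup E] [InnerProductSpace 𝕜 E]

/-- For closed `V` with orthogonal projection `P`, this says `P A P = c P`. -/
def IsScalarCompression (A : E →L[𝕜] E) (c : 𝕜) (V : Submodule 𝕜 E) : Prop :=
  ∀ x ∈ V, ∀ y ∈ V, ⟪x, A y⟫_𝕜 = c * ⟪x, y⟫_𝕜

variable {A : E →L[𝕜] E} {c : 𝕜} {V W : Submodule 𝕜 E}

lemma IsScalarCompression.mono (hW : IsScalarCompression A c W) (hVW : V ≤ W) :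
    IsScalarCompression A c V :=
  fun x hx y hy => hW x (hVW hx) y (hVW hy)

lemma IsScalarCompression.topologicalClosure (hV : IsScalarCompression A c V) :
    IsScalarCompression A c V.topologicalClosure := by
  have hclosed_right : ∀ x : E, IsClosed {y | ⟪x, A y⟫_𝕜 = c * ⟪x, y⟫_𝕜} := fun x =>
    isClosed_eq (by fun_prop) (by fun_prop)
  have hclosed_left : ∀ y : E, IsClosed {x | ⟪x, A y⟫_𝕜 = c * ⟪x, y⟫_𝕜} := fun y =>
    isClosed_eq (by fun_prop) (by fun_prop)
  have hV_closure : ∀ x ∈ V, ∀ y ∈ V.topologicalClosure, ⟪x, A y⟫_𝕜 = c * ⟪x, y⟫_𝕜 :=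
    fun x hx => closure_minimal (hV x hx) (hclosed_right x)
  intro x hx y hy
  exact closure_minimal (fun x hx => hV_closure x hx y hy) (hclosed_left y) hx

lemma isScalarCompression_sSup {s : Set (Submodule 𝕜 E)} (hs : IsChain (· ≤ ·) s)
    (h : ∀ V ∈ s, IsScalarCompression A c V) : IsScalarCompression A c (sSup s) := by
  rcases s.eq_empty_or_nonempty with rfl | hne
  · simp [IsScalarCompression]
  intro x hx y hy
  obtain ⟨V, hVs, hxV⟩ := (mem_sSup_of_directed hne hs.directedOn).1 hx
  obtain ⟨W, hWs, hyW⟩ := (mem_sSup_of_directed hne hs.directedOn).1 hy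
  rcases hs.total hVs hWs with hVW | hWV
  · exact h W hWs x (hVW hxV) y hyW
  · exact h V hVs x hxV y (hWV hyW)

lemma starProjection_comp_comp_eq_smul_iff [V.HasOrthogonalProjection] :
    V.starProjection ∘L A ∘L V.starProjection = c • V.starProjection ↔
      IsScalarCompression A c V := by
  set P := V.starProjection
  have hPP : ∀ z, P (P z) = P z := fun z =>
    starProjection_eq_self_iff.2 (starProjection_apply_mem V z)
  constructor
  · intro h x hx y hy
    calc ⟪x, A y⟫_𝕜 = ⟪P x, A (P y)⟫_𝕜 := by
          rw [starProjection_eq_self_iff.2 hx, starProjection_eq_self_iff.2 hy]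
      _ = ⟪x, (P ∘L A ∘L P) y⟫_𝕜 := V.inner_starProjection_left_eq_right _ _
      _ = c * ⟪x, y⟫_𝕜 := by
          rw [h, smul_apply, inner_smul_right, starProjection_eq_self_iff.2 hy]
  · intro hV
    ext z
    refine ext_inner_left 𝕜 fun w => ?_
    calc ⟪w, (P ∘L A ∘L P) z⟫_𝕜 = ⟪P w, A (P z)⟫_𝕜 :=
          (V.inner_starProjection_left_eq_right _ _).symm
      _ = c * ⟪P w, P z⟫_𝕜 := hV _ (starProjection_apply_mem V w) _ (starProjection_apply_mem V z)
      _ = ⟪w, (c • P) z⟫_𝕜 := by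
          rw [smul_apply, inner_smul_right, V.inner_starProjection_left_eq_right, hPP]

lemma Submodule.inf_orthogonal_ne_bot_of_finrank_lt {K : Submodule 𝕜 E} [FiniteDimensional 𝕜 K]
    [FiniteDimensional 𝕜 W] (h : finrank 𝕜 K < finrank 𝕜 W) : W ⊓ Kᗮ ≠ ⊥ := by
  let f : W →ₗ[𝕜] K := (K.orthogonalProjectionOnto : E →ₗ[𝕜] K) ∘ₗ W.subtype
  have hf : LinearMap.ker f ≠ ⊥ := fun hf =>
    (LinearMap.finrank_le_finrank_of_injective (LinearMap.ker_eq_bot.1 hf)).not_gt h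
  obtain ⟨x, hx, hx0⟩ := (Submodule.ne_bot_iff _).1 hf
  refine (Submodule.ne_bot_iff _).2 ⟨x, ⟨x.2, orthogonalProjectionOnto_eq_zero_iff.1 hx⟩, ?_⟩
  exact_mod_cast hx0

variable [CompleteSpace E]

lemma IsScalarCompression.sup (hV : IsScalarCompression A c V) (hW : IsScalarCompression A c W)
    (hWV : W ≤ (V ⊔ V.map (A : E →ₗ[𝕜] E) ⊔ V.map (A† : E →ₗ[𝕜] E))ᗮ) :
    IsScalarCompression A c (V ⊔ W) := by
  have cross : ∀ v ∈ V, ∀ w ∈ W, ⟪v, A w⟫_𝕜 = c * ⟪v, w⟫_𝕜 ∧ ⟪w, A v⟫_𝕜 = c * ⟪w, v⟫_𝕜 := by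
    intro v hv w hw
    have hw' := (mem_orthogonal _ _).1 (hWV hw)
    have h1 : ⟪v, w⟫_𝕜 = 0 := hw' v (mem_sup_left (mem_sup_left hv))
    have h2 : ⟪A v, w⟫_𝕜 = 0 := hw' _ (mem_sup_left (mem_sup_right (mem_map_of_mem hv)))
    have h3 : ⟪(A†) v, w⟫_𝕜 = 0 := hw' _ (mem_sup_right (mem_map_of_mem hv))
    refine ⟨?_, ?_⟩
    · rw [← ContinuousLinearMap.adjoint_inner_left, h3, h1, mul_zero]
    · rw [inner_eq_zero_symm.1 h2, inner_eq_zero_symm.1 h1, mul_zero]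
  rintro _ hx _ hy
  obtain ⟨v, hv, w, hw, rfl⟩ := mem_sup.1 hx
  obtain ⟨v', hv', w', hw', rfl⟩ := mem_sup.1 hy
  simp only [map_add, inner_add_left, inner_add_right, hV v hv v' hv', hW w hw w' hw',
    (cross v hv w' hw').1, (cross v' hv' w hw).2]
  ring

lemma IsScalarCompression.exists_lt (hV : IsScalarCompression A c V) [FiniteDimensional 𝕜 V]
    (hW : IsScalarCompression A c W) [FiniteDimensional 𝕜 W]
    (hdim : 3 * finrank 𝕜 V < finrank 𝕜 W) :
    ∃ V', V < V' ∧ IsScalarCompression A c V' := by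
  set K := V ⊔ V.map (A : E →ₗ[𝕜] E) ⊔ V.map (A† : E →ₗ[𝕜] E) with hK_def
  have hK : finrank 𝕜 K ≤ 3 * finrank 𝕜 V := by
    have := finrank_add_le_finrank_add_finrank (V ⊔ V.map (A : E →ₗ[𝕜] E))
      (V.map (A† : E →ₗ[𝕜] E))
    have := finrank_add_le_finrank_add_finrank V (V.map (A : E →ₗ[𝕜] E))
    have := finrank_map_le (A : E →ₗ[𝕜] E) V
    have := finrank_map_le (A† : E →ₗ[𝕜] E) V
    rw [hK_def]
    omega
  have hne := inf_orthogonal_ne_bot_of_finrank_lt (hK.trans_lt hdim)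
  refine ⟨V ⊔ (W ⊓ Kᗮ), lt_of_le_of_ne le_sup_left fun heq => hne ?_,
    hV.sup (hW.mono inf_le_left) inf_le_right⟩
  have hN_le : W ⊓ Kᗮ ≤ V := heq ▸ le_sup_right
  have hN_perp : W ⊓ Kᗮ ≤ Vᗮ :=
    inf_le_right.trans (orthogonal_le (le_sup_left.trans le_sup_left))
  exact eq_bot_iff.2 fun x hx => V.inf_orthogonal_eq_bot ▸ ⟨hN_le hx, hN_perp hx⟩

lemma exists_not_finiteDimensional_isScalarCompression
    (h : ∀ n : ℕ, ∃ W : Submodule 𝕜 E, FiniteDimensional 𝕜 W ∧ n < finrank 𝕜 W ∧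
      IsScalarCompression A c W) :
    ∃ V : Submodule 𝕜 E, ¬ FiniteDimensional 𝕜 V ∧ IsScalarCompression A c V := by
  obtain ⟨M, hM⟩ := zorn_le₀ {V | IsScalarCompression A c V} fun s hs hchain =>
    ⟨sSup s, isScalarCompression_sSup hchain hs, fun _ => le_sSup⟩
  refine ⟨M, fun hfin => ?_, hM.prop⟩
  obtain ⟨W, hWfin, hdim, hW⟩ := h (3 * finrank 𝕜 M)
  obtain ⟨V', hlt, hV'⟩ := hM.prop.exists_lt hW hdim
  exact hlt.not_ge (hM.2 hV' hlt.le)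

lemma finiteDimensional_range_of_isCompactOperator {P : E →L[𝕜] E}
    (hP : IsIdempotentElem P) (hc : IsCompactOperator P) :
    FiniteDimensional 𝕜 (LinearMap.range (P : E →ₗ[𝕜] E)) := by
  have := ContinuousLinearMap.finite_dimensional_eigenspace hc 1 one_ne_zero
  refine finiteDimensional_of_le (S₂ := Module.End.eigenspace (P : E →ₗ[𝕜] E) 1) fun x hx => ?_
  obtain ⟨y, rfl⟩ := hx
  rw [Module.End.mem_eigenspace_iff, one_smul]
  exact congrArg (· y) hP

end InnerProductSpace

lemma Submodule.exists_le_finrank_eq {K V : Type*} [DivisionRing K] [AddCommGroup V] [Module K V]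
    {W : Submodule K V} (hW : ¬ FiniteDimensional K W) (k : ℕ) :
    ∃ U ≤ W, FiniteDimensional K U ∧ finrank K U = k := by
  have hk : (k : Cardinal) ≤ Module.rank K W :=
    Cardinal.natCast_lt_aleph0.le.trans (not_lt.1 (mt Module.rank_lt_aleph0_iff.1 hW))
  obtain ⟨f, hf⟩ := exists_linearIndependent_of_le_rank hk
  refine ⟨span K (Set.range (W.subtype ∘ f)), ?_, FiniteDimensional.span_of_finite K
    (Set.finite_range _), ?_⟩
  · rw [span_le]
    rintro _ ⟨i, rfl⟩
    exact (f i).2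
  · rw [finrank_span_eq_card (hf.map' W.subtype W.ker_subtype), Fintype.card_fin]

lemma isOrthProj_iff_isStarProjection {P : H →L[ℂ] H} : IsOrthProj P ↔ IsStarProjection P :=
  ⟨fun h => ⟨h.2, h.1⟩, fun h => ⟨h.isSelfAdjoint, h.isIdempotentElem⟩⟩

lemma exists_isOrthProj_iff (p : Cardinal → Prop) (A : H →L[ℂ] H) (c : ℂ) :
    (∃ P : H →L[ℂ] H, IsOrthProj P ∧ p (opRank P) ∧ P ∘L A ∘L P = c • P) ↔
      ∃ (V : Submodule ℂ H) (_ : V.HasOrthogonalProjection), p (Module.rank ℂ V) ∧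
        IsScalarCompression A c V := by
  constructor
  · rintro ⟨P, hP, hp, hPAP⟩
    obtain ⟨hproj, hP_eq⟩ :=
      isStarProjection_iff_eq_starProjection_range.1 (isOrthProj_iff_isStarProjection.1 hP)
    rw [hP_eq] at hPAP
    exact ⟨_, hproj, hp, starProjection_comp_comp_eq_smul_iff.1 hPAP⟩
  · rintro ⟨V, _, hp, hV⟩
    refine ⟨V.starProjection, isOrthProj_iff_isStarProjection.2 isStarProjection_starProjection,
      ?_, starProjection_comp_comp_eq_smul_iff.2 hV⟩
    rwa [opRank, range_starProjection]

lemma mem_rankKRange_iff {k : ℕ} {A : H →L[ℂ] H} {c : ℂ} :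
    c ∈ rankKRange k A ↔ ∃ V : Submodule ℂ H,
      FiniteDimensional ℂ V ∧ finrank ℂ V = k ∧ IsScalarCompression A c V := by
  refine (exists_isOrthProj_iff (· = k) A c).trans ⟨?_, ?_⟩
  · rintro ⟨V, _, hk, hV⟩
    exact ⟨V, Module.finite_of_rank_eq_nat hk, finrank_eq_of_rank_eq hk, hV⟩
  · rintro ⟨V, _, hk, hV⟩
    exact ⟨V, inferInstance, by rw [← finrank_eq_rank, hk], hV⟩

lemma mem_rankInfRange_iff {A : H →L[ℂ] H} {c : ℂ} :
    c ∈ rankInfRange A ↔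
      ∃ V : Submodule ℂ H, ¬ FiniteDimensional ℂ V ∧ IsScalarCompression A c V := by
  refine (exists_isOrthProj_iff (Cardinal.aleph0 ≤ ·) A c).trans ⟨?_, ?_⟩
  · rintro ⟨V, _, hV_rank, hV⟩
    exact ⟨V, fun _ => (rank_lt_aleph0 ℂ V).not_ge hV_rank, hV⟩
  · rintro ⟨V, hV_inf, hV⟩
    refine ⟨V.topologicalClosure, inferInstance, not_lt.1 fun h => hV_inf ?_,
      hV.topologicalClosure⟩
    have := rank_lt_aleph0_iff.1 h
    exact finiteDimensional_of_le V.le_topologicalClosure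

lemma mem_rankInfRange_iff_forall_mem_rankKRange {A : H →L[ℂ] H} {c : ℂ} :
    c ∈ rankInfRange A ↔ ∀ k : ℕ, 1 ≤ k → c ∈ rankKRange k A := by
  simp_rw [mem_rankInfRange_iff, mem_rankKRange_iff]
  constructor
  · rintro ⟨V, hV_inf, hV⟩ k -
    obtain ⟨U, hUV, hU⟩ := exists_le_finrank_eq hV_inf k
    exact ⟨U, hU.1, hU.2, hV.mono hUV⟩
  · intro h
    refine exists_not_finiteDimensional_isScalarCompression fun n => ?_
    obtain ⟨W, hW_fin, hW_rank, hW⟩ := h (n + 1) n.succ_pos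
    exact ⟨W, hW_fin, hW_rank ▸ n.lt_succ_self, hW⟩

lemma eq_of_mem_rankInfRange {A : H →L[ℂ] H} {μ c : ℂ}
    (hcompact : IsCompactOperator (A - μ • (1 : H →L[ℂ] H))) (hc : c ∈ rankInfRange A) :
    c = μ := by
  obtain ⟨P, hP, hP_rank, hPAP⟩ := hc
  have hPP : P ∘L P = P := hP.2
  have hcompress : P ∘L (A - μ • 1) ∘L P = (c - μ) • P := by
    ext x
    have hPPx : P (P x) = P x := congr($hPP x)
    simp [← congr($hPAP x), hPPx, sub_smul]
  by_contra hne
  have hP_compact : IsCompactOperator P := by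
    rw [← IsCompactOperator.smul_iff₀ (sub_ne_zero.2 hne), ← FunLike.coe_smul, ← hcompress]
    exact (hcompact.comp_clm P).clm_comp P
  have := finiteDimensional_range_of_isCompactOperator hPP hP_compact
  exact (rank_lt_aleph0 ℂ _).not_ge hP_rank

theorem rankInfRange_compact_tfae_general
    (A : H →L[ℂ] H) (μ : ℂ)
    (hcompact : IsCompactOperator (A - μ • (1 : H →L[ℂ] H))) :
    ((rankInfRange A).Nonempty ↔ rankInfRange A = {μ}) ∧
    (rankInfRange A = {μ} ↔ ∀ k : ℕ, 1 ≤ k → μ ∈ rankKRange k A) := by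
  have hsub : rankInfRange A ⊆ {μ} := fun _ hc => eq_of_mem_rankInfRange hcompact hc
  have hne : (rankInfRange A).Nonempty ↔ rankInfRange A = {μ} :=
    ⟨fun h => (Set.subset_singleton_iff_eq.1 hsub).resolve_left h.ne_empty,
      fun h => h ▸ Set.singleton_nonempty μ⟩
  refine ⟨hne, ?_⟩
  rw [← mem_rankInfRange_iff_forall_mem_rankKRange]
  exact ⟨fun h => h ▸ rfl, fun h => hne.1 ⟨μ, h⟩⟩

/-- Let `A` be an operator on an infinite-dimensional Hilbert space and `μ ∈ ℂ` with
`A - μI` compact.  Then the following are equivalent: (a) `Λ_∞(A)` is nonempty;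
(b) `Λ_∞(A) = {μ}`; (c) `μ ∈ Λ_k(A)` for every `k ≥ 1`. -/
theorem rankInfRange_compact_tfae
    (hH : ¬ FiniteDimensional ℂ H) (A : H →L[ℂ] H) (μ : ℂ)
    (hcompact : IsCompactOperator (A - μ • (1 : H →L[ℂ] H))) :
    ((rankInfRange A).Nonempty ↔ rankInfRange A = {μ}) ∧
    (rankInfRange A = {μ} ↔ ∀ k : ℕ, 1 ≤ k → μ ∈ rankKRange k A) :=
  rankInfRange_compact_tfae_general A μ hcompact
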